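/- arXiv:1912.07526 — 3 statements merged into one kernel-verified Lean document; each statement's English description precedes it below -/
import Mathlib

section
/- Let B be symmetric positive semi-definite, α > 0 with αρ(B) < 1, and T ≥ 1 an integer. Define C = Σ_{t=0}^{T−1}(I − αB)^t and M = C^{-1}(I − αB)^T. Then M is symmetric positive definite and its eigenvalues satisfy (1 − αρ(B))^T / (Σ_{t=0}^{T−1}(1 − αρ(B))^t) ≤ λ ≤ 1/T for every eigenvalue λ of M. -/
/-!
Diagonalise `B = U diag(d) Uᴴ`. Then `1 - αB`, its powers, their sum `C`, `C⁻¹` and `M` are all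
`U diag(·) Uᴴ` of the corresponding scalar expressions, so `M = U diag(g(1 - α dᵢ)) Uᴴ` with
`g(x) = x ^ T / (1 + x + ⋯ + x ^ (T - 1))`. Since `0 ≤ dᵢ ≤ ρ`, the numbers `1 - α dᵢ` lie in
`[1 - αρ, 1] ⊆ (0, 1]`, and `g` is positive and increasing on `(0, ∞)` with `g(1) = 1 / T`.
-/

open Matrix Finset Unitary

section ConjDiagonal

variable {n : Type*} [Fintype n] [DecidableEq n] (u : unitary (Matrix n n ℝ))

noncomputable def conjDiagonal : (n → ℝ) →ₐ[ℝ] Matrix n n ℝ :=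
  (conjStarAlgAut ℝ _ u : Matrix n n ℝ →ₐ[ℝ] Matrix n n ℝ).comp (diagonalAlgHom ℝ)

lemma conjDiagonal_apply (f : n → ℝ) :
    conjDiagonal u f = conjStarAlgAut ℝ _ u (diagonal f) := rfl

lemma posDef_conjDiagonal_iff {f : n → ℝ} : (conjDiagonal u f).PosDef ↔ ∀ i, 0 < f i := by
  rw [conjDiagonal_apply, conjStarAlgAut_apply,
    (Unitary.isUnit_coe (U := u)).posDef_star_right_conjugate_iff, posDef_diagonal_iff]

lemma spectrum_conjDiagonal (f : n → ℝ) : spectrum ℝ (conjDiagonal u f) = Set.range f := by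
  rw [conjDiagonal_apply, AlgEquiv.spectrum_eq, spectrum_diagonal]

lemma inv_conjDiagonal {f : n → ℝ} (hf : ∀ i, f i ≠ 0) :
    (conjDiagonal u f)⁻¹ = conjDiagonal u f⁻¹ := by
  refine inv_eq_right_inv ?_
  rw [← map_mul, show f * f⁻¹ = 1 from funext fun i => mul_inv_cancel₀ (hf i), map_one]

end ConjDiagonal

lemma Matrix.mem_spectrum_of_mulVec_eq_smul {K n : Type*} [Field K] [Fintype n] [DecidableEq n]
    {A : Matrix n n K} {μ : K} {v : n → K} (hv : v ≠ 0) (hAv : A *ᵥ v = μ • v) :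
    μ ∈ spectrum K A := by
  rw [← spectrum_toLin']
  exact (Module.End.hasEigenvalue_of_hasEigenvector
    ⟨Module.End.mem_eigenspace_iff.mpr (by rwa [toLin'_apply]), hv⟩).mem_spectrum

section GeomRatio

noncomputable def geomRatio (T : ℕ) (x : ℝ) : ℝ := x ^ T / ∑ t ∈ range T, x ^ t

variable {T : ℕ}

lemma geomRatio_pos (hT : T ≠ 0) {x : ℝ} (hx : 0 < x) : 0 < geomRatio T x :=
  div_pos (pow_pos hx T) (geom_sum_pos hx.le hT)

lemma geomRatio_one (T : ℕ) : geomRatio T 1 = 1 / T := by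
  simp [geomRatio]

lemma geomRatio_le_geomRatio (hT : T ≠ 0) {x y : ℝ} (hx : 0 < x) (hxy : x ≤ y) :
    geomRatio T x ≤ geomRatio T y := by
  have hy : 0 < y := hx.trans_le hxy
  rw [geomRatio, geomRatio, div_le_div_iff₀ (geom_sum_pos hx.le hT) (geom_sum_pos hy.le hT),
    mul_sum, mul_sum]
  refine sum_le_sum fun t ht => ?_
  obtain ⟨s, rfl⟩ := Nat.exists_eq_add_of_le (mem_range.mp ht).le
  -- `x^(t+s) y^t ≤ y^(t+s) x^t` is `x^s ≤ y^s` after cancelling `x^t y^t`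
  rw [pow_add, pow_add, mul_right_comm, mul_right_comm (y ^ t), mul_comm (y ^ t)]
  gcongr

end GeomRatio

lemma inv_geom_sum_mul_pow_conjDiagonal {n : Type*} [Fintype n] [DecidableEq n]
    (u : unitary (Matrix n n ℝ)) {T : ℕ} (hT : T ≠ 0) {φ : n → ℝ} (hφ : ∀ i, 0 < φ i) :
    (∑ t ∈ range T, conjDiagonal u φ ^ t)⁻¹ * conjDiagonal u φ ^ T
      = conjDiagonal u fun i => geomRatio T (φ i) := by
  simp only [← map_pow, ← map_sum]
  rw [inv_conjDiagonal, ← map_mul]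
  · congr 1
    ext i
    simp [geomRatio, div_eq_inv_mul, Finset.sum_apply]
  · intro i
    simpa only [Finset.sum_apply, Pi.pow_apply] using (geom_sum_pos (hφ i).le hT).ne'

theorem stmt_4 (n : ℕ) (B : Matrix (Fin n) (Fin n) ℝ) (hB : B.PosSemidef)
    (ρ : ℝ) (hρ : IsGreatest {μ : ℝ | ∃ v : Fin n → ℝ, v ≠ 0 ∧ B.mulVec v = μ • v} ρ)
    (α : ℝ) (hα : 0 < α) (hαρ : α * ρ < 1) (T : ℕ) (hT : 1 ≤ T)
    (C M : Matrix (Fin n) (Fin n) ℝ)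
    (hC : C = ∑ t ∈ Finset.range T, ((1 : Matrix (Fin n) (Fin n) ℝ) - α • B) ^ t)
    (hM : M = C⁻¹ * ((1 : Matrix (Fin n) (Fin n) ℝ) - α • B) ^ T) :
    M.PosDef ∧
    ∀ (lam : ℝ) (v : Fin n → ℝ), v ≠ 0 → M.mulVec v = lam • v →
      (1 - α * ρ) ^ T / (∑ t ∈ Finset.range T, (1 - α * ρ) ^ t) ≤ lam ∧
      lam ≤ 1 / (T : ℝ) := by
  have hT₀ : T ≠ 0 := Nat.one_le_iff_ne_zero.mp hT
  set u := hB.1.eigenvectorUnitary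
  set d := hB.1.eigenvalues
  have hBd : B = conjDiagonal u d := by
    simpa [conjDiagonal_apply, RCLike.ofReal_real_eq_id] using hB.1.spectral_theorem
  have hdρ (i : Fin n) : d i ≤ ρ :=
    hρ.2 ⟨_, (WithLp.ofLp_eq_zero 2).ne.2 <| hB.1.eigenvectorBasis.orthonormal.ne_zero i,
      hB.1.mulVec_eigenvectorBasis i⟩
  set φ : Fin n → ℝ := 1 - α • d
  have hφ (i : Fin n) : 1 - α * ρ ≤ φ i ∧ φ i ≤ 1 :=
    ⟨sub_le_sub_left (mul_le_mul_of_nonneg_left (hdρ i) hα.le) 1,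
      sub_le_self 1 (mul_nonneg hα.le (hB.eigenvalues_nonneg i))⟩
  have hφpos (i : Fin n) : 0 < φ i := by linarith [(hφ i).1]
  have hA : 1 - α • B = conjDiagonal u φ := by rw [hBd, map_sub, map_one, map_smul]
  rw [hM, hC, hA, inv_geom_sum_mul_pow_conjDiagonal u hT₀ hφpos]
  refine ⟨(posDef_conjDiagonal_iff u).mpr fun i => geomRatio_pos hT₀ (hφpos i),
    fun lam v hv hMv => ?_⟩
  obtain ⟨i, rfl⟩ : lam ∈ Set.range fun i => geomRatio T (φ i) := by
    rw [← spectrum_conjDiagonal u]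
    exact mem_spectrum_of_mulVec_eq_smul hv hMv
  exact ⟨geomRatio_le_geomRatio hT₀ (sub_pos.mpr hαρ) (hφ i).1,
    geomRatio_one T ▸ geomRatio_le_geomRatio hT₀ (hφpos i) (hφ i).2⟩
end

section
/- Let B be symmetric positive semi-definite, α > 0 with αρ(B) < 1, and T ≥ 1. Define C = Σ_{t=0}^{T−1}(I − αB)^t, M = C^{-1}(I − αB)^T, and N = (1/α)(C^{-1} − M). Then N is symmetric positive semi-definite. -/
/-!
Write `A = 1 - α • B`, so that `C = ∑_{t<T} A ^ t`. The geometric sum identity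
`C * (1 - A) = 1 - A ^ T` gives `C⁻¹ - M = C⁻¹ * (1 - A ^ T) = α • B`, hence `N = B`, provided `C`
is invertible. It is: `α * ρ < 1` makes every eigenvalue `1 - α λ` of `A` positive, so
`C = 1 + ∑_{1 ≤ t < T} A ^ t` is positive definite.
-/

open Matrix Finset

open scoped ComplexOrder

namespace Matrix

variable {n : Type*} [Fintype n] [DecidableEq n]

theorem inv_geom_sum_mul_one_sub_pow {R : Type*} [CommRing R] (A : Matrix n n R) (T : ℕ)
    (h : IsUnit (∑ t ∈ range T, A ^ t).det) :
    (∑ t ∈ range T, A ^ t)⁻¹ * (1 - A ^ T) = 1 - A := by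
  rw [← geom_sum_mul_neg, nonsing_inv_mul_cancel_left _ _ h]

theorem PosSemidef.posDef_geom_sum {𝕜 : Type*} [RCLike 𝕜] {A : Matrix n n 𝕜}
    (hA : A.PosSemidef) {T : ℕ} (hT : 1 ≤ T) : (∑ t ∈ range T, A ^ t).PosDef := by
  obtain ⟨T, rfl⟩ := Nat.exists_eq_add_of_le' hT
  rw [sum_range_succ', pow_zero]
  exact PosDef.posSemidef_add (posSemidef_sum _ fun t _ => hA.pow (t + 1)) PosDef.one

theorem IsHermitian.posDef_one_sub_smul {B : Matrix n n ℝ} (hB : B.IsHermitian) {α ρ : ℝ}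
    (hα : 0 < α) (hρ : ρ ∈ upperBounds {μ : ℝ | ∃ v : n → ℝ, v ≠ 0 ∧ B *ᵥ v = μ • v})
    (hαρ : α * ρ < 1) : (1 - α • B).PosDef := by
  have hA : (1 - α • B).IsHermitian := isHermitian_one.sub (hB.smul (IsSelfAdjoint.all α))
  refine hA.posDef_iff_eigenvalues_pos.mpr fun i => ?_
  set v : n → ℝ := ⇑(hA.eigenvectorBasis i)
  set μ := hA.eigenvalues i
  have hv : v ≠ 0 := fun h =>
    hA.eigenvectorBasis.orthonormal.ne_zero i (by ext j; exact congrFun h j)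
  have hBv : B *ᵥ v = (α⁻¹ * (1 - μ)) • v := by
    have h := hA.mulVec_eigenvectorBasis i
    rw [sub_mulVec, one_mulVec, smul_mulVec] at h
    rw [mul_smul, sub_smul, one_smul, ← h, sub_sub_cancel, smul_smul, inv_mul_cancel₀ hα.ne',
      one_smul]
  have hle : α⁻¹ * (1 - μ) ≤ ρ := hρ ⟨v, hv, hBv⟩
  rw [inv_mul_le_iff₀ hα] at hle
  linarith

end Matrix

theorem stmt_5 (n : ℕ) (B : Matrix (Fin n) (Fin n) ℝ) (hB : B.PosSemidef)
    (ρ : ℝ) (hρ : IsGreatest {μ : ℝ | ∃ v : Fin n → ℝ, v ≠ 0 ∧ B.mulVec v = μ • v} ρ)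
    (α : ℝ) (hα : 0 < α) (hαρ : α * ρ < 1) (T : ℕ) (hT : 1 ≤ T)
    (C M N : Matrix (Fin n) (Fin n) ℝ)
    (hC : C = ∑ t ∈ Finset.range T, ((1 : Matrix (Fin n) (Fin n) ℝ) - α • B) ^ t)
    (hM : M = C⁻¹ * ((1 : Matrix (Fin n) (Fin n) ℝ) - α • B) ^ T)
    (hN : N = (1 / α) • (C⁻¹ - M)) :
    N.PosSemidef := by
  have hA := hB.isHermitian.posDef_one_sub_smul hα hρ.2 hαρ
  have hCdet : IsUnit (∑ t ∈ range T, (1 - α • B) ^ t).det :=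
    (hA.posSemidef.posDef_geom_sum hT).isUnit.map detMonoidHom
  have hNB : N = B := by
    rw [hN, hM, hC, ← mul_one_sub, inv_geom_sum_mul_one_sub_pow _ _ hCdet, sub_sub_cancel,
      smul_smul, one_div_mul_cancel hα.ne', one_smul]
  exact hNB ▸ hB
end

section
/- Let B be symmetric PSD, 0 < αρ(B) < 1, C = Σ_{t=0}^{T−1}(I−αB)^t, M = C^{-1}(I−αB)^T, λ update λ^{k+1} = λ^k + βAx^{k+1}, and one FlexPD-C iteration x^{k+1} = (I−αB)^T x^k − αC∇f(x^k) − αCA'λ^k. If (x*, λ*) is a fixed point of this iteration, then with N = (1/α)(C^{-1} − M): α(∇f(x^k) − ∇f(x*)) = M(x^k − x^{k+1}) + α(βA'A − N)(x^{k+1} − x*) − αA'(λ^{k+1} − λ*). -/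
/-!
Multiplying the primal update by `C⁻¹` solves it for `α • ∇f`, both at the iterate and at the fixed
point. Subtracting the two expressions, the dual update turns `A'λ^k` into `A'λ^{k+1} - β A'A x^{k+1}`,
and `A x* = 0` lets `A'A x^{k+1}` be written as `A'A (x^{k+1} - x*)`; the remaining `C⁻¹`-terms are
exactly `α N (x^{k+1} - x*)`.
-/

open Matrix

section

variable {m n 𝕜 : Type*} [Fintype m] [Fintype n] [DecidableEq n] [Field 𝕜]

theorem smul_grad_eq_of_primal_update {P C : Matrix n n 𝕜} (hC : IsUnit C) (A : Matrix m n 𝕜)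
    {α : 𝕜} {x y g : n → 𝕜} {lam : m → 𝕜}
    (h : y = P *ᵥ x - α • C *ᵥ g - α • (C * Aᵀ) *ᵥ lam) :
    α • g = (C⁻¹ * P) *ᵥ x - C⁻¹ *ᵥ y - α • Aᵀ *ᵥ lam := by
  have hCC : C⁻¹ * C = 1 := nonsing_inv_mul C ((isUnit_iff_isUnit_det C).mp hC)
  rw [h]
  simp only [mulVec_sub, mulVec_smul, mulVec_mulVec, ← Matrix.mul_assoc, hCC, Matrix.one_mul,
    one_mulVec]
  module

theorem smul_grad_sub_eq_of_primal_dual_step {P C : Matrix n n 𝕜} (hC : IsUnit C)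
    (A : Matrix m n 𝕜) {α β : 𝕜} (hα : α ≠ 0) {xk x1 xs gk gs : n → 𝕜} {lamk lam1 lams : m → 𝕜}
    (hx : x1 = P *ᵥ xk - α • C *ᵥ gk - α • (C * Aᵀ) *ᵥ lamk)
    (hlam : lam1 = lamk + β • A *ᵥ x1)
    (hfix : xs = P *ᵥ xs - α • C *ᵥ gs - α • (C * Aᵀ) *ᵥ lams)
    (hAx : A *ᵥ xs = 0) :
    α • (gk - gs) = (C⁻¹ * P) *ᵥ (xk - x1)
      + α • ((β • (Aᵀ * A) - (1 / α) • (C⁻¹ - C⁻¹ * P)) *ᵥ (x1 - xs))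
      - α • Aᵀ *ᵥ (lam1 - lams) := by
  have hk := smul_grad_eq_of_primal_update hC A hx
  have hs := smul_grad_eq_of_primal_update hC A hfix
  have hAA : (Aᵀ * A) *ᵥ (x1 - xs) = Aᵀ *ᵥ (A *ᵥ x1) := by
    rw [← mulVec_mulVec, mulVec_sub, hAx, sub_zero]
  have hN : α • ((1 / α) • (C⁻¹ - C⁻¹ * P)) *ᵥ (x1 - xs)
      = C⁻¹ *ᵥ (x1 - xs) - (C⁻¹ * P) *ᵥ (x1 - xs) := by
    rw [smul_mulVec, smul_smul, mul_one_div_cancel hα, one_smul, sub_mulVec]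
  rw [smul_sub, hk, hs, sub_mulVec, smul_sub α, hN, smul_mulVec, hAA, hlam]
  simp only [mulVec_sub, mulVec_add, mulVec_smul]
  module

end

theorem stmt_18_general (n ε : ℕ) (gradf : (Fin n → ℝ) → (Fin n → ℝ))
    (A : Matrix (Fin ε) (Fin n) ℝ) (B : Matrix (Fin n) (Fin n) ℝ)
    (α β : ℝ) (hα : 0 < α) (T : ℕ)
    (C M N : Matrix (Fin n) (Fin n) ℝ)
    (hCunit : IsUnit C)
    (hM : M = C⁻¹ * ((1 : Matrix (Fin n) (Fin n) ℝ) - α • B) ^ T)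
    (hN : N = (1 / α) • (C⁻¹ - M))
    (xk x1 : Fin n → ℝ) (lamk lam1 : Fin ε → ℝ)
    (hx : x1 = (((1 : Matrix (Fin n) (Fin n) ℝ) - α • B) ^ T).mulVec xk
      - α • C.mulVec (gradf xk) - α • (C * Aᵀ).mulVec lamk)
    (hlam : lam1 = lamk + β • A.mulVec x1)
    (xstar : Fin n → ℝ) (lamstar : Fin ε → ℝ)
    (hfix : xstar = (((1 : Matrix (Fin n) (Fin n) ℝ) - α • B) ^ T).mulVec xstar
      - α • C.mulVec (gradf xstar) - α • (C * Aᵀ).mulVec lamstar)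
    (hAx : A.mulVec xstar = 0) :
    α • (gradf xk - gradf xstar) =
      M.mulVec (xk - x1) + α • ((β • (Aᵀ * A) - N).mulVec (x1 - xstar))
        - α • Aᵀ.mulVec (lam1 - lamstar) := by
  subst hM hN
  exact smul_grad_sub_eq_of_primal_dual_step hCunit A hα.ne' hx hlam hfix hAx

theorem stmt_18 (n ε : ℕ) (gradf : (Fin n → ℝ) → (Fin n → ℝ))
    (A : Matrix (Fin ε) (Fin n) ℝ) (B : Matrix (Fin n) (Fin n) ℝ)
    (hB : B.PosSemidef)
    (ρ : ℝ) (hρ : IsGreatest {μ : ℝ | ∃ v : Fin n → ℝ, v ≠ 0 ∧ B.mulVec v = μ • v} ρ)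
    (α β : ℝ) (hα : 0 < α) (hβ : 0 < β) (hαρ : α * ρ < 1) (T : ℕ) (hT : 1 ≤ T)
    (C M N : Matrix (Fin n) (Fin n) ℝ)
    (hC : C = ∑ t ∈ Finset.range T, ((1 : Matrix (Fin n) (Fin n) ℝ) - α • B) ^ t)
    (hCunit : IsUnit C)
    (hM : M = C⁻¹ * ((1 : Matrix (Fin n) (Fin n) ℝ) - α • B) ^ T)
    (hN : N = (1 / α) • (C⁻¹ - M))
    (xk x1 : Fin n → ℝ) (lamk lam1 : Fin ε → ℝ)
    (hx : x1 = (((1 : Matrix (Fin n) (Fin n) ℝ) - α • B) ^ T).mulVec xk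
      - α • C.mulVec (gradf xk) - α • (C * Aᵀ).mulVec lamk)
    (hlam : lam1 = lamk + β • A.mulVec x1)
    (xstar : Fin n → ℝ) (lamstar : Fin ε → ℝ)
    (hfix : xstar = (((1 : Matrix (Fin n) (Fin n) ℝ) - α • B) ^ T).mulVec xstar
      - α • C.mulVec (gradf xstar) - α • (C * Aᵀ).mulVec lamstar)
    (hAx : A.mulVec xstar = 0) :
    α • (gradf xk - gradf xstar) =
      M.mulVec (xk - x1) + α • ((β • (Aᵀ * A) - N).mulVec (x1 - xstar))
        - α • Aᵀ.mulVec (lam1 - lamstar) :=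
  stmt_18_general n ε gradf A B α β hα T C M N hCunit hM hN xk x1 lamk lam1 hx hlam xstar lamstar
    hfix hAx
end
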